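/- If a sequent Γ ⊢ A of the source IL-theory I_s is circle-witnessable in the target IL-theory I_t, then the sequent Γ° ⊢ A° is witnessable in the AL-theory I_t°. -/

import Mathlib

/-!
A deep embedding of intuitionistic affine logic (AL) and intuitionistic logic (IL),
with the Girard translations and the parametrised functional interpretations of
Dinis & Oliva, "Parametrised Functional Interpretations".

Terms are untyped combinatory terms (tuples of witnesses are coded via pairing,
the empty tuple via `nil`); finite types are tracked separately via the
type `Ty` and the explicit typing predicates `tyP`.
-/

namespace PFI

/-- Finite types (with `unit` and `prod` used to code tuples of types,
and `fseq` for finite-sequence types). -/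
inductive Ty : Type
  | nat : Ty
  | bool : Ty
  | unit : Ty
  | arr : Ty → Ty → Ty
  | prod : Ty → Ty → Ty
  | fseq : Ty → Ty

/-- Terms over a set `ν` of constants: de Bruijn variables, application, pairing,
and designated constants (combinators `K`, `S`, booleans, `if`, arithmetic,
recursor, singleton/union of finite sets, length/indexing of finite sequences). -/
inductive Tm (ν : Type) : Type
  | var : Nat → Tm ν
  | const : ν → Tm ν
  | ap : Tm ν → Tm ν → Tm ν
  | pair : Tm ν → Tm ν → Tm ν
  | pfst : Tm ν → Tm ν
  | psnd : Tm ν → Tm ν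
  | nil : Tm ν
  | kc : Ty → Ty → Tm ν
  | sc : Ty → Ty → Ty → Tm ν
  | tt : Tm ν
  | ff : Tm ν
  | iteC : Tm ν
  | zero : Tm ν
  | succC : Tm ν
  | recC : Ty → Tm ν
  | singC : Tm ν
  | cupC : Tm ν
  | unionC : Tm ν
  | lenC : Tm ν
  | idxC : Tm ν

namespace Tm

variable {ν : Type}

/-- Renaming of variables. -/
def rename (ρ : Nat → Nat) : Tm ν → Tm ν
  | var n => var (ρ n)
  | const c => const c
  | ap s t => ap (rename ρ s) (rename ρ t)
  | pair s t => pair (rename ρ s) (rename ρ t)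
  | pfst t => pfst (rename ρ t)
  | psnd t => psnd (rename ρ t)
  | nil => nil
  | kc a b => kc a b
  | sc a b c => sc a b c
  | tt => tt
  | ff => ff
  | iteC => iteC
  | zero => zero
  | succC => succC
  | recC a => recC a
  | singC => singC
  | cupC => cupC
  | unionC => unionC
  | lenC => lenC
  | idxC => idxC

/-- Simultaneous substitution. -/
def subst (s : Nat → Tm ν) : Tm ν → Tm ν
  | var n => s n
  | const c => const c
  | ap u t => ap (subst s u) (subst s t)
  | pair u t => pair (subst s u) (subst s t)
  | pfst t => pfst (subst s t)
  | psnd t => psnd (subst s t)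
  | nil => nil
  | kc a b => kc a b
  | sc a b c => sc a b c
  | tt => tt
  | ff => ff
  | iteC => iteC
  | zero => zero
  | succC => succC
  | recC a => recC a
  | singC => singC
  | cupC => cupC
  | unionC => unionC
  | lenC => lenC
  | idxC => idxC

/-- Substitute `t` for the variable `0`, lowering all other variables by one. -/
def sub1 (t : Tm ν) : Nat → Tm ν
  | 0 => t
  | n + 1 => var n

/-- Substitute `t` for the variable `0`, keeping all other variables fixed. -/
def sub0 (t : Tm ν) : Nat → Tm ν
  | 0 => t
  | n + 1 => var (n + 1)

/-- A term is closed if it is invariant under all renamings. -/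
def Closed (t : Tm ν) : Prop := ∀ ρ : Nat → Nat, t.rename ρ = t

/-- Iterated application. -/
def apps : Tm ν → List (Tm ν) → Tm ν
  | t, [] => t
  | t, s :: l => apps (ap t s) l

/-- Definition by cases `if(b, x, y)`. -/
def ite3 (b x y : Tm ν) : Tm ν := ap (ap (ap iteC b) x) y

def succ (t : Tm ν) : Tm ν := ap succC t

/-- Numerals. -/
def numeral : Nat → Tm ν
  | 0 => zero
  | n + 1 => succ (numeral n)

/-- Singleton finite set `{t}`. -/
def sing (t : Tm ν) : Tm ν := ap singC t

/-- Union of two finite sets. -/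
def cup (s t : Tm ν) : Tm ν := ap (ap cupC s) t

/-- `⋃_{x ∈ z} f x`. -/
def fUnion (f z : Tm ν) : Tm ν := ap (ap unionC f) z

end Tm

/-- Lifting a renaming under a binder. -/
def liftR (ρ : Nat → Nat) : Nat → Nat
  | 0 => 0
  | n + 1 => ρ n + 1

/-- Lifting a substitution under a binder. -/
def liftS {ν : Type} (s : Nat → Tm ν) : Nat → Tm ν
  | 0 => Tm.var 0
  | n + 1 => (s n).rename Nat.succ

/-- Shifting by two (used to reserve variables `0`, `1` for counter-witness/witness). -/
def shift2 : Nat → Nat := fun n => n + 2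

/-- The permutation `0 ↦ 1, 1 ↦ 2, 2 ↦ 0` (used for the quantifier clauses of
the interpretations). -/
def rotRen : Nat → Nat
  | 0 => 1
  | 1 => 2
  | 2 => 0
  | n + 3 => n + 3

/-- The transposition `0 ↔ 1`. -/
def swap01 : Nat → Nat
  | 0 => 1
  | 1 => 0
  | n + 2 => n + 2

/-- Formulas of intuitionistic affine logic over constants `ν` and predicate
symbols `π`, with built-in equality `eq`, inequality `le`, membership in a
finite set `mem` and explicit typing predicates `tyP`. -/
inductive ALF (ν π : Type) : Type
  | atom : π → List (Tm ν) → ALF ν π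
  | eq : Tm ν → Tm ν → ALF ν π
  | le : Tm ν → Tm ν → ALF ν π
  | mem : Tm ν → Tm ν → ALF ν π
  | tyP : Ty → Tm ν → ALF ν π
  | bot : ALF ν π
  | tens : ALF ν π → ALF ν π → ALF ν π
  | limp : ALF ν π → ALF ν π → ALF ν π
  | bang : ALF ν π → ALF ν π
  | all : ALF ν π → ALF ν π
  | ex : ALF ν π → ALF ν π

namespace ALF

variable {ν π : Type}

def rename (ρ : Nat → Nat) : ALF ν π → ALF ν π
  | atom P ts => atom P (ts.map (Tm.rename ρ))
  | eq s t => eq (s.rename ρ) (t.rename ρ)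
  | le s t => le (s.rename ρ) (t.rename ρ)
  | mem s t => mem (s.rename ρ) (t.rename ρ)
  | tyP τ t => tyP τ (t.rename ρ)
  | bot => bot
  | tens A B => tens (rename ρ A) (rename ρ B)
  | limp A B => limp (rename ρ A) (rename ρ B)
  | bang A => bang (rename ρ A)
  | all A => all (rename (liftR ρ) A)
  | ex A => ex (rename (liftR ρ) A)

def subst (s : Nat → Tm ν) : ALF ν π → ALF ν π
  | atom P ts => atom P (ts.map (Tm.subst s))
  | eq u t => eq (u.subst s) (t.subst s)
  | le u t => le (u.subst s) (t.subst s)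
  | mem u t => mem (u.subst s) (t.subst s)
  | tyP τ t => tyP τ (t.subst s)
  | bot => bot
  | tens A B => tens (subst s A) (subst s B)
  | limp A B => limp (subst s A) (subst s B)
  | bang A => bang (subst s A)
  | all A => all (subst (liftS s) A)
  | ex A => ex (subst (liftS s) A)

end ALF

/-- Formulas of (first-order) intuitionistic logic. -/
inductive ILF (ν π : Type) : Type
  | atom : π → List (Tm ν) → ILF ν π
  | eq : Tm ν → Tm ν → ILF ν π
  | le : Tm ν → Tm ν → ILF ν π
  | mem : Tm ν → Tm ν → ILF ν π
  | tyP : Ty → Tm ν → ILF ν π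
  | bot : ILF ν π
  | and : ILF ν π → ILF ν π → ILF ν π
  | imp : ILF ν π → ILF ν π → ILF ν π
  | all : ILF ν π → ILF ν π
  | ex : ILF ν π → ILF ν π

namespace ILF

variable {ν π : Type}

def rename (ρ : Nat → Nat) : ILF ν π → ILF ν π
  | atom P ts => atom P (ts.map (Tm.rename ρ))
  | eq s t => eq (s.rename ρ) (t.rename ρ)
  | le s t => le (s.rename ρ) (t.rename ρ)
  | mem s t => mem (s.rename ρ) (t.rename ρ)
  | tyP τ t => tyP τ (t.rename ρ)
  | bot => bot
  | and A B => and (rename ρ A) (rename ρ B)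
  | imp A B => imp (rename ρ A) (rename ρ B)
  | all A => all (rename (liftR ρ) A)
  | ex A => ex (rename (liftR ρ) A)

def subst (s : Nat → Tm ν) : ILF ν π → ILF ν π
  | atom P ts => atom P (ts.map (Tm.subst s))
  | eq u t => eq (u.subst s) (t.subst s)
  | le u t => le (u.subst s) (t.subst s)
  | mem u t => mem (u.subst s) (t.subst s)
  | tyP τ t => tyP τ (t.subst s)
  | bot => bot
  | and A B => and (subst s A) (subst s B)
  | imp A B => imp (subst s A) (subst s B)
  | all A => all (subst (liftS s) A)
  | ex A => ex (subst (liftS s) A)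

end ILF

/-- Sequent calculus for intuitionistic affine logic `AL` (Table 1 of the paper),
over a set `Ax` of non-logical axioms. -/
inductive ALPf {ν π : Type} (Ax : List (ALF ν π) → ALF ν π → Prop) :
    List (ALF ν π) → ALF ν π → Prop
  | ax {Γ A} : Ax Γ A → ALPf Ax Γ A
  | id (A) : ALPf Ax [A] A
  | exch {Γ Δ : List (ALF ν π)} {A} : List.Perm Γ Δ → ALPf Ax Γ A → ALPf Ax Δ A
  | efq {Γ A} : ALPf Ax (ALF.bot :: Γ) A
  | cut {Γ Δ A B} : ALPf Ax Γ A → ALPf Ax (A :: Δ) B → ALPf Ax (Γ ++ Δ) B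
  | tensR {Γ Δ A B} : ALPf Ax Γ A → ALPf Ax Δ B → ALPf Ax (Γ ++ Δ) (ALF.tens A B)
  | tensL {Γ A B C} : ALPf Ax (A :: B :: Γ) C → ALPf Ax (ALF.tens A B :: Γ) C
  | limpR {Γ A B} : ALPf Ax (A :: Γ) B → ALPf Ax Γ (ALF.limp A B)
  | limpL {Γ Δ A B C} : ALPf Ax Γ A → ALPf Ax (B :: Δ) C →
      ALPf Ax (ALF.limp A B :: (Γ ++ Δ)) C
  | allR {Γ : List (ALF ν π)} {A} : ALPf Ax (Γ.map (ALF.rename Nat.succ)) A → ALPf Ax Γ (ALF.all A)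
  | allL {Γ A B} (t : Tm ν) : ALPf Ax (A.subst (Tm.sub1 t) :: Γ) B →
      ALPf Ax (ALF.all A :: Γ) B
  | exR {Γ A} (t : Tm ν) : ALPf Ax Γ (A.subst (Tm.sub1 t)) → ALPf Ax Γ (ALF.ex A)
  | exL {Γ : List (ALF ν π)} {A B} : ALPf Ax (A :: Γ.map (ALF.rename Nat.succ)) (B.rename Nat.succ) →
      ALPf Ax (ALF.ex A :: Γ) B
  | con {Γ A B} : ALPf Ax (ALF.bang A :: ALF.bang A :: Γ) B → ALPf Ax (ALF.bang A :: Γ) B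
  | wkn {Γ A B} : ALPf Ax Γ B → ALPf Ax (A :: Γ) B
  | bangR {Γ : List (ALF ν π)} {A} : ALPf Ax (Γ.map ALF.bang) A → ALPf Ax (Γ.map ALF.bang) (ALF.bang A)
  | bangL {Γ A B} : ALPf Ax (A :: Γ) B → ALPf Ax (ALF.bang A :: Γ) B

/-- Sequent calculus for first-order intuitionistic logic `IL`, over a set `Ax`
of non-logical axioms. -/
inductive ILPf {ν π : Type} (Ax : List (ILF ν π) → ILF ν π → Prop) :
    List (ILF ν π) → ILF ν π → Prop
  | ax {Γ A} : Ax Γ A → ILPf Ax Γ A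
  | id (A) : ILPf Ax [A] A
  | exch {Γ Δ : List (ILF ν π)} {A} : List.Perm Γ Δ → ILPf Ax Γ A → ILPf Ax Δ A
  | efq {Γ A} : ILPf Ax (ILF.bot :: Γ) A
  | cut {Γ Δ A B} : ILPf Ax Γ A → ILPf Ax (A :: Δ) B → ILPf Ax (Γ ++ Δ) B
  | andR {Γ Δ A B} : ILPf Ax Γ A → ILPf Ax Δ B → ILPf Ax (Γ ++ Δ) (ILF.and A B)
  | andL {Γ A B C} : ILPf Ax (A :: B :: Γ) C → ILPf Ax (ILF.and A B :: Γ) C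
  | impR {Γ A B} : ILPf Ax (A :: Γ) B → ILPf Ax Γ (ILF.imp A B)
  | impL {Γ Δ A B C} : ILPf Ax Γ A → ILPf Ax (B :: Δ) C →
      ILPf Ax (ILF.imp A B :: (Γ ++ Δ)) C
  | allR {Γ : List (ILF ν π)} {A} : ILPf Ax (Γ.map (ILF.rename Nat.succ)) A → ILPf Ax Γ (ILF.all A)
  | allL {Γ A B} (t : Tm ν) : ILPf Ax (A.subst (Tm.sub1 t) :: Γ) B →
      ILPf Ax (ILF.all A :: Γ) B
  | exR {Γ A} (t : Tm ν) : ILPf Ax Γ (A.subst (Tm.sub1 t)) → ILPf Ax Γ (ILF.ex A)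
  | exL {Γ : List (ILF ν π)} {A B} : ILPf Ax (A :: Γ.map (ILF.rename Nat.succ)) (B.rename Nat.succ) →
      ILPf Ax (ILF.ex A :: Γ) B
  | con {Γ A B} : ILPf Ax (A :: A :: Γ) B → ILPf Ax (A :: Γ) B
  | wkn {Γ A B} : ILPf Ax Γ B → ILPf Ax (A :: Γ) B

/-- Interderivability in an affine theory. -/
def IffPfA {ν π : Type} (Ax : List (ALF ν π) → ALF ν π → Prop) (A B : ALF ν π) : Prop :=
  ALPf Ax [A] B ∧ ALPf Ax [B] A

/-- Interderivability in an intuitionistic theory. -/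
def IffPfI {ν π : Type} (Ax : List (ILF ν π) → ILF ν π → Prop) (A B : ILF ν π) : Prop :=
  ILPf Ax [A] B ∧ ILPf Ax [B] A

/-- The first Girard translation `(·)*`. -/
def star {ν π : Type} : ILF ν π → ALF ν π
  | .atom P ts => .atom P ts
  | .eq s t => .eq s t
  | .le s t => .le s t
  | .mem s t => .mem s t
  | .tyP τ t => .tyP τ t
  | .bot => .bot
  | .and A B => .tens (star A) (star B)
  | .imp A B => .limp (.bang (star A)) (star B)
  | .all A => .all (star A)
  | .ex A => .ex (.bang (star A))

/-- The second Girard translation `(·)°`. -/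
def circ {ν π : Type} : ILF ν π → ALF ν π
  | .atom P ts => .bang (.atom P ts)
  | .eq s t => .bang (.eq s t)
  | .le s t => .bang (.le s t)
  | .mem s t => .bang (.mem s t)
  | .tyP τ t => .bang (.tyP τ t)
  | .bot => .bang .bot
  | .and A B => .tens (circ A) (circ B)
  | .imp A B => .bang (.limp (circ A) (circ B))
  | .all A => .bang (.all (circ A))
  | .ex A => .ex (circ A)

/-- The forgetful translation from affine to intuitionistic formulas. -/
def forget {ν π : Type} : ALF ν π → ILF ν π
  | .atom P ts => .atom P ts
  | .eq s t => .eq s t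
  | .le s t => .le s t
  | .mem s t => .mem s t
  | .tyP τ t => .tyP τ t
  | .bot => .bot
  | .tens A B => .and (forget A) (forget B)
  | .limp A B => .imp (forget A) (forget B)
  | .bang A => forget A
  | .all A => .all (forget A)
  | .ex A => .ex (forget A)

/-- The axioms of the affine theory `I*` obtained from an intuitionistic theory `I`. -/
def starAx {ν π : Type} (Ax : List (ILF ν π) → ILF ν π → Prop) :
    List (ALF ν π) → ALF ν π → Prop :=
  fun Δ B => ∃ Γ A, Ax Γ A ∧ Δ = Γ.map (fun C => ALF.bang (star C)) ∧ B = star A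

/-- The axioms of the affine theory `I°` obtained from an intuitionistic theory `I`. -/
def circAx {ν π : Type} (Ax : List (ILF ν π) → ILF ν π → Prop) :
    List (ALF ν π) → ALF ν π → Prop :=
  fun Δ B => ∃ Γ A, Ax Γ A ∧ Δ = Γ.map circ ∧ B = circ A

end PFI
namespace PFI

/-! ## The parametrised interpretation of affine theories

Formulas are interpreted as formulas `|A|^x_y` with two reserved de Bruijn
variables: variable `1` is the (coded tuple of) witnesses `x` and variable `0`
is the (coded tuple of) counter-witnesses `y`; the object variables of `A`
are shifted up by `2`.  Tuples of types are coded via `Ty.prod`/`Ty.unit`. -/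

/-- Arrow type `ρ₁ → ⋯ → ρₙ → σ`. -/
def arrTy : List Ty → Ty → Ty
  | [], τ => τ
  | a :: l, τ => Ty.arr a (arrTy l τ)

/-- The parameters of the parametrised interpretation of affine logic:
a division of the predicate symbols (including the typing predicates) into
computational and non-computational ones, the bounded formulas `P̃(x; a)`
(`ptP`/`ptT`, with variable `0` the witness `a` and variables `i+1` the
arguments of `P`), the witnessing types `τ_P`, the witnessing-domain predicates
`W_τ` (with free variable `0`), the bounding types `bty` and the abstract
bounded quantifier `bq τ` (binding variable `0` of the input, the bound `a`
being variable `0` of the output), together with the terms `η`, `⊔`, `∘`. -/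
structure Params (ν π : Type) where
  compP : π → Bool
  arP : π → Nat
  wtyP : π → Ty
  ptP : π → ALF ν π
  compT : Ty → Bool
  wtyT : Ty → Ty
  ptT : Ty → ALF ν π
  W : Ty → ALF ν π
  bty : Ty → Ty
  bq : Ty → ALF ν π → ALF ν π
  etaTm : Ty → Tm ν
  joinTm : Ty → Tm ν
  circTm : Ty → Ty → Tm ν

/-- The bounding types, extended to coded tuples componentwise. -/
def btyS (bt : Ty → Ty) : Ty → Ty
  | Ty.unit => Ty.unit
  | Ty.prod a b => Ty.prod (btyS bt a) (btyS bt b)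
  | τ => bt τ

mutual
/-- The tuple `τ⁺_A` of witnessing types of a formula (coded as a single type). -/
def posTy {ν π : Type} (pa : Params ν π) : ALF ν π → Ty
  | .atom P _ => if pa.compP P then pa.wtyP P else Ty.unit
  | .eq _ _ => Ty.unit
  | .le _ _ => Ty.unit
  | .mem _ _ => Ty.unit
  | .tyP τ _ => if pa.compT τ then pa.wtyT τ else Ty.unit
  | .bot => Ty.unit
  | .tens A B => Ty.prod (posTy pa A) (posTy pa B)
  | .limp A B => Ty.prod (Ty.arr (posTy pa A) (posTy pa B))
      (Ty.arr (posTy pa A) (Ty.arr (negTy pa B) (negTy pa A)))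
  | .bang A => posTy pa A
  | .all A => posTy pa A
  | .ex A => posTy pa A

/-- The tuple `τ⁻_A` of counter-witnessing types of a formula. -/
def negTy {ν π : Type} (pa : Params ν π) : ALF ν π → Ty
  | .atom _ _ => Ty.unit
  | .eq _ _ => Ty.unit
  | .le _ _ => Ty.unit
  | .mem _ _ => Ty.unit
  | .tyP _ _ => Ty.unit
  | .bot => Ty.unit
  | .tens A B => Ty.prod (negTy pa A) (negTy pa B)
  | .limp A B => Ty.prod (posTy pa A) (negTy pa B)
  | .bang A => btyS pa.bty (negTy pa A)
  | .all A => negTy pa A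
  | .ex A => negTy pa A
end

/-- The abstract bounded quantifier `⋀_{x ⊑ a} A`, extended to coded tuples of
variables componentwise (binding variable `0` of `A`; the bound `a` is variable
`0` of the result). -/
def bqStructA {ν π : Type} (bq : Ty → ALF ν π → ALF ν π) : Ty → ALF ν π → ALF ν π
  | Ty.unit, A => (A.subst (Tm.sub1 Tm.nil)).rename Nat.succ
  | Ty.prod τ₁ τ₂, A =>
      let B := A.subst (fun k => match k with
        | 0 => Tm.pair (Tm.var 1) (Tm.var 0)
        | k + 1 => Tm.var (k + 2))
      let C := (bqStructA bq τ₂ B).rename swap01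
      let D := bqStructA bq τ₁ C
      D.subst (fun k => match k with
        | 0 => Tm.pfst (Tm.var 0)
        | 1 => Tm.psnd (Tm.var 0)
        | k + 2 => Tm.var (k + 1))
  | τ, A => bq τ A

/-- Substitution projecting the two reserved variables (used for `⊗`/`∧`). -/
def projS {ν : Type} (pr : Tm ν → Tm ν) : Nat → Tm ν := fun k =>
  match k with
  | 0 => pr (Tm.var 0)
  | 1 => pr (Tm.var 1)
  | k + 2 => Tm.var (k + 2)

/-- In `|A ⊸ B|^{f,g}_{x,w}`: the substitution placing the antecedent at
witness `x` and counter-witness `g x w`. -/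
def limpSubA {ν : Type} : Nat → Tm ν := fun k =>
  match k with
  | 0 => Tm.ap (Tm.ap (Tm.psnd (Tm.var 1)) (Tm.pfst (Tm.var 0))) (Tm.psnd (Tm.var 0))
  | 1 => Tm.pfst (Tm.var 0)
  | k + 2 => Tm.var (k + 2)

/-- In `|A ⊸ B|^{f,g}_{x,w}`: the substitution placing the consequent at
witness `f x` and counter-witness `w`. -/
def limpSubB {ν : Type} : Nat → Tm ν := fun k =>
  match k with
  | 0 => Tm.psnd (Tm.var 0)
  | 1 => Tm.ap (Tm.pfst (Tm.var 1)) (Tm.pfst (Tm.var 0))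
  | k + 2 => Tm.var (k + 2)

/-- Substitution instantiating `P̃(x; a)` at the reserved witness variable and
the (shifted) arguments of the atom. -/
def atomSub {ν : Type} (ts : List (Tm ν)) : Nat → Tm ν := fun k =>
  match k with
  | 0 => Tm.var 1
  | k + 1 => (ts.getD k Tm.nil).rename shift2

/-- Substitution instantiating a bounded typing predicate `τ̃(t; a)`. -/
def tySub {ν : Type} (t : Tm ν) : Nat → Tm ν := fun k =>
  match k with
  | 0 => Tm.var 1
  | 1 => t.rename shift2
  | k + 2 => Tm.var (k + 2)

/-- Substitution instantiating `P̃(z; b)` at given terms `z` and `b`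
(for unary predicates, e.g. the boolean or typing predicates). -/
def instPT {ν : Type} (z b : Tm ν) : Nat → Tm ν := fun k =>
  match k with
  | 0 => b
  | 1 => z
  | k + 2 => Tm.var (k + 2)

/-- Substitution instantiating the reserved witness variable at `w` and the
reserved counter-witness variable at `y` (other variables untouched). -/
def wc {ν : Type} (w y : Tm ν) : Nat → Tm ν := fun k =>
  match k with
  | 0 => y
  | 1 => w
  | k + 2 => Tm.var (k + 2)

/-- The parametrised interpretation `A ↦ |A|^x_y` of affine formulas
(Definition 2.5 of the paper), with witnesses `x` coded at variable `1` and
counter-witnesses `y` at variable `0`. -/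
def inter {ν π : Type} (pa : Params ν π) : ALF ν π → ALF ν π
  | .atom P ts =>
      if pa.compP P then (pa.ptP P).subst (atomSub ts)
      else .atom P (ts.map (Tm.rename shift2))
  | .eq s t => .eq (s.rename shift2) (t.rename shift2)
  | .le s t => .le (s.rename shift2) (t.rename shift2)
  | .mem s t => .mem (s.rename shift2) (t.rename shift2)
  | .tyP τ t =>
      if pa.compT τ then (pa.ptT τ).subst (tySub t)
      else .tyP τ (t.rename shift2)
  | .bot => .bot
  | .tens A B =>
      .tens ((inter pa A).subst (projS Tm.pfst)) ((inter pa B).subst (projS Tm.psnd))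
  | .limp A B =>
      .limp ((inter pa A).subst limpSubA) ((inter pa B).subst limpSubB)
  | .bang A => .bang (bqStructA pa.bq (negTy pa A) (inter pa A))
  | .all A => .all ((inter pa A).rename rotRen)
  | .ex A => .ex ((inter pa A).rename rotRen)

/-- `W_τ(t)`. -/
def Wat {ν π : Type} (pa : Params ν π) (τ : Ty) (t : Tm ν) : ALF ν π :=
  (pa.W τ).subst (Tm.sub1 t)

/-- The list of variables `x₁, …, xₙ` (at de Bruijn indices `1, …, n`). -/
def xVars {ν : Type} (n : Nat) : List (Tm ν) :=
  List.ofFn (fun j : Fin n => Tm.var (j.1 + 1))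

/-- Substitution used for the `i`-th interpreted hypothesis of a witnessable
sequent with `n` hypotheses: the witness is `x_i = var (i+1)`, the
counter-witness is the given term, and object variables live above `n`. -/
def seqSubHyp {ν : Type} (n i : Nat) (cw : Tm ν) : Nat → Tm ν := fun k =>
  match k with
  | 0 => cw
  | 1 => Tm.var (i + 1)
  | k + 2 => Tm.var (k + n + 1)

/-- Substitution used for the conclusion of a witnessable sequent: the
counter-witness is `w = var 0` and the witness is the given term. -/
def seqSubCon {ν : Type} (n : Nat) (w : Tm ν) : Nat → Tm ν := fun k =>
  match k with
  | 0 => Tm.var 0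
  | 1 => w
  | k + 2 => Tm.var (k + n + 1)

/-- A sequent `Γ ⊢ A` of the source affine theory is *witnessable* in the
target affine theory (Definition 2.6): there are closed terms `γ, a` in `W`
with `!W(x, w), |Γ|^x_{γ x w} ⊢ |A|^{a x}_w`. -/
def ALWitnessable {ν π : Type} (pa : Params ν π)
    (Axt : List (ALF ν π) → ALF ν π → Prop)
    (Γ : List (ALF ν π)) (A : ALF ν π) : Prop :=
  ∃ γ : Fin Γ.length → Tm ν, ∃ a : Tm ν,
    (∀ i, (γ i).Closed) ∧ a.Closed ∧
    (∀ i, ALPf Axt []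
      (Wat pa (arrTy (Γ.map (posTy pa) ++ [negTy pa A]) (negTy pa (Γ.get i))) (γ i))) ∧
    ALPf Axt [] (Wat pa (arrTy (Γ.map (posTy pa)) (posTy pa A)) a) ∧
    ALPf Axt
      (ALF.bang (Wat pa (negTy pa A) (Tm.var 0)) ::
        (List.ofFn (fun i : Fin Γ.length =>
            ALF.bang (Wat pa (posTy pa (Γ.get i)) (Tm.var (i.1 + 1)))) ++
         List.ofFn (fun i : Fin Γ.length =>
            (inter pa (Γ.get i)).subst
              (seqSubHyp Γ.length i.1
                (Tm.apps (γ i) (xVars Γ.length ++ [Tm.var 0]))))))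
      ((inter pa A).subst (seqSubCon Γ.length (Tm.apps a (xVars Γ.length))))

/-- Adequacy of a choice of parameters for a class `C` of formulas:
assumptions (P3), (P4) and (P5) (with (Q1), (Q2), (Cη), (C⊔), (C∘)) of the
paper, together with the requirement that the target theory contains the
combinatory conversions (its being an extension of `AL^ω`, assumption (P1)). -/
structure Adequate {ν π : Type} (pa : Params ν π)
    (Axt : List (ALF ν π) → ALF ν π → Prop) (C : ALF ν π → Prop) : Prop where
  -- (P3): bounded versions are stronger than the predicates themselves
  pt_imp : ∀ P : π, pa.compP P = true →
    ALPf Axt [pa.ptP P] (ALF.atom P (List.ofFn (fun i : Fin (pa.arP P) => Tm.var (i.1 + 1))))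
  ptT_imp : ∀ τ : Ty, pa.compT τ = true → ALPf Axt [pa.ptT τ] (ALF.tyP τ (Tm.var 1))
  -- (P4): the witnesses of bounded predicates are in W
  pt_W : ∀ P : π, pa.compP P = true → ALPf Axt [pa.ptP P] (Wat pa (pa.wtyP P) (Tm.var 0))
  ptT_W : ∀ τ : Ty, pa.compT τ = true → ALPf Axt [pa.ptT τ] (Wat pa (pa.wtyT τ) (Tm.var 0))
  -- (W_K), (W_S), (W_Ap)
  W_K : ∀ a b : Ty, ALPf Axt [] (Wat pa (Ty.arr a (Ty.arr b a)) (Tm.kc a b))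
  W_S : ∀ a b c : Ty, ALPf Axt []
    (Wat pa (Ty.arr (Ty.arr a (Ty.arr b c)) (Ty.arr (Ty.arr a b) (Ty.arr a c))) (Tm.sc a b c))
  W_Ap : ∀ a b : Ty, ALPf Axt [Wat pa a (Tm.var 0), Wat pa (Ty.arr a b) (Tm.var 1)]
    (Wat pa b (Tm.ap (Tm.var 1) (Tm.var 0)))
  -- (P1): the target theory proves the combinatory conversions
  conv_K₁ : ∀ (A : ALF ν π) (a b : Ty) (t s : Tm ν),
    ALPf Axt [A.subst (Tm.sub0 (Tm.ap (Tm.ap (Tm.kc a b) t) s))] (A.subst (Tm.sub0 t))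
  conv_K₂ : ∀ (A : ALF ν π) (a b : Ty) (t s : Tm ν),
    ALPf Axt [A.subst (Tm.sub0 t)] (A.subst (Tm.sub0 (Tm.ap (Tm.ap (Tm.kc a b) t) s)))
  conv_S₁ : ∀ (A : ALF ν π) (a b c : Ty) (t u v : Tm ν),
    ALPf Axt [A.subst (Tm.sub0 (Tm.ap (Tm.ap (Tm.ap (Tm.sc a b c) t) u) v))]
      (A.subst (Tm.sub0 (Tm.ap (Tm.ap t v) (Tm.ap u v))))
  conv_S₂ : ∀ (A : ALF ν π) (a b c : Ty) (t u v : Tm ν),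
    ALPf Axt [A.subst (Tm.sub0 (Tm.ap (Tm.ap t v) (Tm.ap u v)))]
      (A.subst (Tm.sub0 (Tm.ap (Tm.ap (Tm.ap (Tm.sc a b c) t) u) v)))
  -- (Q1): monotonicity of the bounded quantifier
  Q1 : ∀ (τ : Ty) (A B : ALF ν π), C A → C B →
    ALPf Axt [A] B → ALPf Axt [pa.bq τ A] (pa.bq τ B)
  -- (Q2)
  Q2 : ∀ τ : Ty, ALPf Axt [] (pa.bq τ (ALF.bang (Wat pa τ (Tm.var 0))))
  -- (Cη)
  W_eta : ∀ τ : Ty, ALPf Axt [] (Wat pa (Ty.arr τ (pa.bty τ)) (pa.etaTm τ))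
  C_eta : ∀ (τ : Ty) (A : ALF ν π), C A → ∀ t : Tm ν,
    ALPf Axt [ALF.bang (Wat pa τ t),
      ALF.bang ((pa.bq τ A).subst (Tm.sub1 (Tm.ap (pa.etaTm τ) t)))]
      (A.subst (Tm.sub1 t))
  -- (C⊔)
  W_join : ∀ τ : Ty, ALPf Axt []
    (Wat pa (Ty.arr (pa.bty τ) (Ty.arr (pa.bty τ) (pa.bty τ))) (pa.joinTm τ))
  C_join : ∀ (τ : Ty) (A : ALF ν π), C A → ∀ t₁ t₂ : Tm ν,
    ALPf Axt [ALF.bang (Wat pa (pa.bty τ) t₁), ALF.bang (Wat pa (pa.bty τ) t₂),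
      ALF.bang ((pa.bq τ A).subst (Tm.sub1 (Tm.apps (pa.joinTm τ) [t₁, t₂])))]
      (ALF.tens ((pa.bq τ A).subst (Tm.sub1 t₁)) ((pa.bq τ A).subst (Tm.sub1 t₂)))
  -- (C∘)
  W_circ : ∀ ρ τ : Ty, ALPf Axt []
    (Wat pa (Ty.arr (Ty.arr ρ (pa.bty τ)) (Ty.arr (pa.bty ρ) (pa.bty τ))) (pa.circTm ρ τ))
  C_circ : ∀ (ρ τ : Ty) (A : ALF ν π), C A → ∀ tf tz : Tm ν,
    ALPf Axt [ALF.bang (Wat pa (Ty.arr ρ (pa.bty τ)) tf),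
      ALF.bang (Wat pa (pa.bty ρ) tz),
      ALF.bang ((pa.bq τ A).subst (Tm.sub1 (Tm.apps (pa.circTm ρ τ) [tf, tz])))]
      ((pa.bq ρ (ALF.bang ((pa.bq τ A).subst (fun k =>
          match k with
          | 0 => Tm.ap (tf.rename Nat.succ) (Tm.var 0)
          | k + 1 => Tm.var (k + 1))))).subst (Tm.sub1 tz))

/-- Assumption (P6): monotone definition-by-cases terms for the interpretation
of the boolean predicate. -/
structure P6Data {ν π : Type} (pa : Params ν π)
    (Axt : List (ALF ν π) → ALF ν π → Prop) where
  ifP : π → Tm ν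
  ifT : Ty → Tm ν
  ifP_W : ∀ P : π, ALPf Axt []
    (Wat pa (Ty.arr (pa.wtyT Ty.bool)
      (Ty.arr (pa.wtyP P) (Ty.arr (pa.wtyP P) (pa.wtyP P)))) (ifP P))
  ifT_W : ∀ τ : Ty, ALPf Axt []
    (Wat pa (Ty.arr (pa.wtyT Ty.bool)
      (Ty.arr (pa.wtyT τ) (Ty.arr (pa.wtyT τ) (pa.wtyT τ)))) (ifT τ))
  ifP_mon : ∀ (P : π) (t₁ t₂ tz tb : Tm ν),
    ALPf Axt [ALF.bang (Wat pa (pa.wtyP P) t₁), ALF.bang (Wat pa (pa.wtyP P) t₂),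
      ALF.bang ((pa.ptT Ty.bool).subst (instPT tz tb)),
      ALF.bang ((pa.ptP P).subst (Tm.sub0 (Tm.ite3 tz t₁ t₂)))]
      ((pa.ptP P).subst (Tm.sub0 (Tm.apps (ifP P) [tb, t₁, t₂])))
  ifT_mon : ∀ (τ : Ty) (t₁ t₂ tz tb : Tm ν),
    ALPf Axt [ALF.bang (Wat pa (pa.wtyT τ) t₁), ALF.bang (Wat pa (pa.wtyT τ) t₂),
      ALF.bang ((pa.ptT Ty.bool).subst (instPT tz tb)),
      ALF.bang ((pa.ptT τ).subst (Tm.sub0 (Tm.ite3 tz t₁ t₂)))]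
      ((pa.ptT τ).subst (Tm.sub0 (Tm.apps (ifT τ) [tb, t₁, t₂])))
  ttW : Tm ν
  ffW : Tm ν
  tt_b : ALPf Axt [] ((pa.ptT Ty.bool).subst (instPT Tm.tt ttW))
  ff_b : ALPf Axt [] ((pa.ptT Ty.bool).subst (instPT Tm.ff ffW))

/-- Assumption (P7): monotone "maximum over an interval" terms for the
interpretation of the natural-number predicate. -/
structure P7Data {ν π : Type} (pa : Params ν π)
    (Axt : List (ALF ν π) → ALF ν π → Prop) where
  mP : π → Tm ν
  mT : Ty → Tm ν
  mP_W : ∀ P : π, ALPf Axt []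
    (Wat pa (Ty.arr (Ty.arr Ty.nat (pa.wtyP P))
      (Ty.arr (pa.wtyT Ty.nat) (pa.wtyP P))) (mP P))
  mT_W : ∀ τ : Ty, ALPf Axt []
    (Wat pa (Ty.arr (Ty.arr Ty.nat (pa.wtyT τ))
      (Ty.arr (pa.wtyT Ty.nat) (pa.wtyT τ))) (mT τ))
  mP_mon : ∀ (P : π) (tf tn ta : Tm ν),
    ALPf Axt [ALF.bang (ALF.all (ALF.limp (ALF.bang (ALF.tyP Ty.nat (Tm.var 0)))
        (Wat pa (pa.wtyP P) (Tm.ap (tf.rename Nat.succ) (Tm.var 0))))),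
      ALF.bang ((pa.ptT Ty.nat).subst (instPT tn ta)),
      ALF.bang ((pa.ptP P).subst (Tm.sub0 (Tm.ap tf tn)))]
      ((pa.ptP P).subst (Tm.sub0 (Tm.apps (mP P) [tf, ta])))
  mT_mon : ∀ (τ : Ty) (tf tn ta : Tm ν),
    ALPf Axt [ALF.bang (ALF.all (ALF.limp (ALF.bang (ALF.tyP Ty.nat (Tm.var 0)))
        (Wat pa (pa.wtyT τ) (Tm.ap (tf.rename Nat.succ) (Tm.var 0))))),
      ALF.bang ((pa.ptT Ty.nat).subst (instPT tn ta)),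
      ALF.bang ((pa.ptT τ).subst (Tm.sub0 (Tm.ap tf tn)))]
      ((pa.ptT τ).subst (Tm.sub0 (Tm.apps (mT τ) [tf, ta])))
  bound : ∀ ta : Tm ν, ta.Closed → ∃ N : Nat,
    ALPf Axt [(pa.ptT Ty.nat).subst (instPT (Tm.var 0) ta)]
      (ALF.le (Tm.var 0) (Tm.numeral N))

end PFI
namespace PFI

/-! ## Parametrised interpretations of intuitionistic theories -/

/-- A choice of parameters for the interpretation of intuitionistic theories
(the same data as `Params`, but with intuitionistic parameter formulas). -/
structure ParamsIL (ν π : Type) where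
  compP : π → Bool
  arP : π → Nat
  wtyP : π → Ty
  ptP : π → ILF ν π
  compT : Ty → Bool
  wtyT : Ty → Ty
  ptT : Ty → ILF ν π
  W : Ty → ILF ν π
  bty : Ty → Ty
  bq : Ty → ILF ν π → ILF ν π
  etaTm : Ty → Tm ν
  joinTm : Ty → Tm ν
  circTm : Ty → Ty → Tm ν

/-- The `(·)*`-translated affine parameters obtained from intuitionistic
parameters (Definition 3.1 of the paper). -/
def ParamsIL.toALs {ν π : Type} (q : ParamsIL ν π) : Params ν π where
  compP := q.compP
  arP := q.arP
  wtyP := q.wtyP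
  ptP := fun P => star (q.ptP P)
  compT := q.compT
  wtyT := q.wtyT
  ptT := fun τ => star (q.ptT τ)
  W := fun τ => star (q.W τ)
  bty := q.bty
  bq := fun τ A => star (q.bq τ (forget A))
  etaTm := q.etaTm
  joinTm := q.joinTm
  circTm := q.circTm

/-- The `(·)°`-translated affine parameters obtained from intuitionistic
parameters. -/
def ParamsIL.toALc {ν π : Type} (q : ParamsIL ν π) : Params ν π where
  compP := q.compP
  arP := q.arP
  wtyP := q.wtyP
  ptP := fun P => circ (q.ptP P)
  compT := q.compT
  wtyT := q.wtyT
  ptT := fun τ => circ (q.ptT τ)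
  W := fun τ => circ (q.W τ)
  bty := q.bty
  bq := fun τ A => circ (q.bq τ (forget A))
  etaTm := q.etaTm
  joinTm := q.joinTm
  circTm := q.circTm

/-- The bullet-interpretation `|A|•^x_y := (||A*||^x_y)ᶠ` of intuitionistic
formulas (Definition 3.2). -/
def bullet {ν π : Type} (q : ParamsIL ν π) (A : ILF ν π) : ILF ν π :=
  forget (inter q.toALs (star A))

/-- The circle-interpretation `|A|∘^x_y := (||A°||^x_y)ᶠ` of intuitionistic
formulas (Definition 3.2). -/
def circle {ν π : Type} (q : ParamsIL ν π) (A : ILF ν π) : ILF ν π :=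
  forget (inter q.toALc (circ A))

/-- The intuitionistic bounded quantifier, extended to coded tuples. -/
def bqStructI {ν π : Type} (bq : Ty → ILF ν π → ILF ν π) : Ty → ILF ν π → ILF ν π
  | Ty.unit, A => (A.subst (Tm.sub1 Tm.nil)).rename Nat.succ
  | Ty.prod τ₁ τ₂, A =>
      let B := A.subst (fun k => match k with
        | 0 => Tm.pair (Tm.var 1) (Tm.var 0)
        | k + 1 => Tm.var (k + 2))
      let C := (bqStructI bq τ₂ B).rename swap01
      let D := bqStructI bq τ₁ C
      D.subst (fun k => match k with
        | 0 => Tm.pfst (Tm.var 0)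
        | 1 => Tm.psnd (Tm.var 0)
        | k + 2 => Tm.var (k + 1))
  | τ, A => bq τ A

/-- `W_τ(t)` in the intuitionistic target theory. -/
def WatI {ν π : Type} (q : ParamsIL ν π) (τ : Ty) (t : Tm ν) : ILF ν π :=
  (q.W τ).subst (Tm.sub1 t)

/-- A sequent `Γ ⊢ A` of the source intuitionistic theory is
`•`-witnessable in the target intuitionistic theory: there are closed terms
`γ, a` in `W` with `W(x, w), ⋀_{y ⊑ γ x w} |Γ|•^x_y ⊢ |A|•^{a x}_w`. -/
def BulletWitnessable {ν π : Type} (q : ParamsIL ν π)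
    (Axt : List (ILF ν π) → ILF ν π → Prop)
    (Γ : List (ILF ν π)) (A : ILF ν π) : Prop :=
  ∃ γ : Fin Γ.length → Tm ν, ∃ a : Tm ν,
    (∀ i, (γ i).Closed) ∧ a.Closed ∧
    (∀ i, ILPf Axt []
      (WatI q (arrTy (Γ.map (fun C => posTy q.toALs (star C)) ++ [negTy q.toALs (star A)])
        (btyS q.bty (negTy q.toALs (star (Γ.get i))))) (γ i))) ∧
    ILPf Axt [] (WatI q (arrTy (Γ.map (fun C => posTy q.toALs (star C)))
      (posTy q.toALs (star A))) a) ∧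
    ILPf Axt
      (WatI q (negTy q.toALs (star A)) (Tm.var 0) ::
        (List.ofFn (fun i : Fin Γ.length =>
            WatI q (posTy q.toALs (star (Γ.get i))) (Tm.var (i.1 + 1))) ++
         List.ofFn (fun i : Fin Γ.length =>
            (bqStructI q.bq (negTy q.toALs (star (Γ.get i))) (bullet q (Γ.get i))).subst
              (seqSubHyp Γ.length i.1
                (Tm.apps (γ i) (xVars Γ.length ++ [Tm.var 0]))))))
      ((bullet q A).subst (seqSubCon Γ.length (Tm.apps a (xVars Γ.length))))

/-- A sequent `Γ ⊢ A` of the source intuitionistic theory is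
`∘`-witnessable in the target intuitionistic theory: there are closed terms
`γ, a` in `W` with `W(x, w), |Γ|∘^x_{γ x w} ⊢ |A|∘^{a x}_w`. -/
def CircWitnessable {ν π : Type} (q : ParamsIL ν π)
    (Axt : List (ILF ν π) → ILF ν π → Prop)
    (Γ : List (ILF ν π)) (A : ILF ν π) : Prop :=
  ∃ γ : Fin Γ.length → Tm ν, ∃ a : Tm ν,
    (∀ i, (γ i).Closed) ∧ a.Closed ∧
    (∀ i, ILPf Axt []
      (WatI q (arrTy (Γ.map (fun C => posTy q.toALc (circ C)) ++ [negTy q.toALc (circ A)])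
        (negTy q.toALc (circ (Γ.get i)))) (γ i))) ∧
    ILPf Axt [] (WatI q (arrTy (Γ.map (fun C => posTy q.toALc (circ C)))
      (posTy q.toALc (circ A))) a) ∧
    ILPf Axt
      (WatI q (negTy q.toALc (circ A)) (Tm.var 0) ::
        (List.ofFn (fun i : Fin Γ.length =>
            WatI q (posTy q.toALc (circ (Γ.get i))) (Tm.var (i.1 + 1))) ++
         List.ofFn (fun i : Fin Γ.length =>
            (circle q (Γ.get i)).subst
              (seqSubHyp Γ.length i.1
                (Tm.apps (γ i) (xVars Γ.length ++ [Tm.var 0]))))))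
      ((circle q A).subst (seqSubCon Γ.length (Tm.apps a (xVars Γ.length))))

/-! ## Some concrete theories -/

/-- The defined disjunction of `IL^𝔹`:
`A ∨ B := ∃z^𝔹 (((z = T) → A) ∧ ((z = F) → B))`. -/
def orF {ν π : Type} (A B : ILF ν π) : ILF ν π :=
  ILF.ex (ILF.and (ILF.tyP Ty.bool (Tm.var 0))
    (ILF.and (ILF.imp (ILF.eq (Tm.var 0) Tm.tt) (A.rename Nat.succ))
             (ILF.imp (ILF.eq (Tm.var 0) Tm.ff) (B.rename Nat.succ))))

/-- The defined additive conjunction of `AL^𝔹`: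
`A & B := ∀z (!𝔹(z) ⊸ ((!(z = T) ⊸ A) ⊗ (!(z = F) ⊸ B)))`. -/
def withF {ν π : Type} (A B : ALF ν π) : ALF ν π :=
  ALF.all (ALF.limp (ALF.bang (ALF.tyP Ty.bool (Tm.var 0)))
    (ALF.tens (ALF.limp (ALF.bang (ALF.eq (Tm.var 0) Tm.tt)) (A.rename Nat.succ))
              (ALF.limp (ALF.bang (ALF.eq (Tm.var 0) Tm.ff)) (B.rename Nat.succ))))

/-- The defined additive disjunction of `AL^𝔹`:
`A ⊕ B := ∃z (!𝔹(z) ⊗ ((!(z = T) ⊸ A) ⊗ (!(z = F) ⊸ B)))`. -/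
def oplusF {ν π : Type} (A B : ALF ν π) : ALF ν π :=
  ALF.ex (ALF.tens (ALF.bang (ALF.tyP Ty.bool (Tm.var 0)))
    (ALF.tens (ALF.limp (ALF.bang (ALF.eq (Tm.var 0) Tm.tt)) (A.rename Nat.succ))
              (ALF.limp (ALF.bang (ALF.eq (Tm.var 0) Tm.ff)) (B.rename Nat.succ))))

/-- The non-logical axioms of the intuitionistic theory of booleans `IL^𝔹`
(equality axioms, boolean axioms and definition by cases). -/
inductive AxILB {ν π : Type} : List (ILF ν π) → ILF ν π → Prop
  | eqRefl (t : Tm ν) : AxILB [] (ILF.eq t t)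
  | eqRepl (A : ILF ν π) (t s : Tm ν) :
      AxILB [ILF.eq t s, A.subst (Tm.sub0 t)] (A.subst (Tm.sub0 s))
  | boolT : AxILB [] (ILF.tyP Ty.bool Tm.tt)
  | boolF : AxILB [] (ILF.tyP Ty.bool Tm.ff)
  | tfNe : AxILB [ILF.eq Tm.tt Tm.ff] ILF.bot
  | boolCase (A : ILF ν π) (t : Tm ν) :
      AxILB [A.subst (Tm.sub0 Tm.tt), A.subst (Tm.sub0 Tm.ff), ILF.tyP Ty.bool t]
        (A.subst (Tm.sub0 t))
  | iteT (x y : Tm ν) : AxILB [] (ILF.eq (Tm.ite3 Tm.tt x y) x)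
  | iteF (x y : Tm ν) : AxILB [] (ILF.eq (Tm.ite3 Tm.ff x y) y)

/-- The non-logical axioms of the intuitionistic theory of finite types `IL^ω`
(an extension of `IL^𝔹` with combinators, application, pairing and explicit
typing predicates). -/
inductive AxOm {ν π : Type} : List (ILF ν π) → ILF ν π → Prop
  | ilb {Γ : List (ILF ν π)} {A : ILF ν π} : AxILB Γ A → AxOm Γ A
  | convK (t s : Tm ν) (a b : Ty) :
      AxOm [] (ILF.eq (Tm.ap (Tm.ap (Tm.kc a b) t) s) t)
  | convS (t u v : Tm ν) (a b c : Ty) :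
      AxOm [] (ILF.eq (Tm.ap (Tm.ap (Tm.ap (Tm.sc a b c) t) u) v)
        (Tm.ap (Tm.ap t v) (Tm.ap u v)))
  | pairFst (s t : Tm ν) : AxOm [] (ILF.eq (Tm.pfst (Tm.pair s t)) s)
  | pairSnd (s t : Tm ν) : AxOm [] (ILF.eq (Tm.psnd (Tm.pair s t)) t)
  | tyK (a b : Ty) : AxOm [] (ILF.tyP (Ty.arr a (Ty.arr b a)) (Tm.kc a b))
  | tyS (a b c : Ty) : AxOm []
      (ILF.tyP (Ty.arr (Ty.arr a (Ty.arr b c)) (Ty.arr (Ty.arr a b) (Ty.arr a c)))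
        (Tm.sc a b c))
  | tyAp (a b : Ty) (f x : Tm ν) :
      AxOm [ILF.tyP (Ty.arr a b) f, ILF.tyP a x] (ILF.tyP b (Tm.ap f x))
  | tyPair (a b : Ty) (s t : Tm ν) :
      AxOm [ILF.tyP a s, ILF.tyP b t] (ILF.tyP (Ty.prod a b) (Tm.pair s t))
  | tyFst (a b : Ty) (t : Tm ν) :
      AxOm [ILF.tyP (Ty.prod a b) t] (ILF.tyP a (Tm.pfst t))
  | tySnd (a b : Ty) (t : Tm ν) :
      AxOm [ILF.tyP (Ty.prod a b) t] (ILF.tyP b (Tm.psnd t))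
  | tyNil : AxOm [] (ILF.tyP Ty.unit Tm.nil)

/-- The non-logical axioms of Heyting arithmetic in all finite types
`(WE-)HA^ω` with explicit typing predicates (extending `IL^ω` with the
successor axioms, recursor axioms and the induction schema). -/
inductive AxHA {ν π : Type} : List (ILF ν π) → ILF ν π → Prop
  | om {Γ : List (ILF ν π)} {A : ILF ν π} : AxOm Γ A → AxHA Γ A
  | tyZero : AxHA [] (ILF.tyP Ty.nat Tm.zero)
  | tySucc (t : Tm ν) : AxHA [ILF.tyP Ty.nat t] (ILF.tyP Ty.nat (Tm.succ t))
  | succInj (s t : Tm ν) : AxHA [ILF.eq (Tm.succ s) (Tm.succ t)] (ILF.eq s t)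
  | succNeZero (t : Tm ν) : AxHA [ILF.eq (Tm.succ t) Tm.zero] ILF.bot
  | tyRec (a : Ty) : AxHA []
      (ILF.tyP (Ty.arr a (Ty.arr (Ty.arr Ty.nat (Ty.arr a a)) (Ty.arr Ty.nat a)))
        (Tm.recC a))
  | recZero (a : Ty) (x f : Tm ν) :
      AxHA [] (ILF.eq (Tm.apps (Tm.recC a) [x, f, Tm.zero]) x)
  | recSucc (a : Ty) (x f n : Tm ν) :
      AxHA [] (ILF.eq (Tm.apps (Tm.recC a) [x, f, Tm.succ n])
        (Tm.apps f [n, Tm.apps (Tm.recC a) [x, f, n]]))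
  | leZero (t : Tm ν) : AxHA [] (ILF.le Tm.zero t)
  | leSucc (s t : Tm ν) : AxHA [ILF.le s t] (ILF.le (Tm.succ s) (Tm.succ t))
  | leRefl (t : Tm ν) : AxHA [] (ILF.le t t)
  | leTrans (s t u : Tm ν) : AxHA [ILF.le s t, ILF.le t u] (ILF.le s u)
  | ind (A : ILF ν π) :
      AxHA [A.subst (Tm.sub0 Tm.zero),
        ILF.all (ILF.imp (ILF.tyP Ty.nat (Tm.var 0))
          (ILF.imp (A.rename (liftR Nat.succ))
            ((A.rename (liftR Nat.succ)).subst (Tm.sub0 (Tm.succ (Tm.var 0)))))),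
        ILF.tyP Ty.nat (Tm.var 0)] A

/-- The non-logical axioms of the target arithmetic (``N-HA^ω`` extended with
finite sets/sequences: membership, singletons, unions, lengths). -/
inductive AxHAt {ν π : Type} : List (ILF ν π) → ILF ν π → Prop
  | ha {Γ : List (ILF ν π)} {A : ILF ν π} : AxHA Γ A → AxHAt Γ A
  | memSing (t : Tm ν) : AxHAt [] (ILF.mem t (Tm.sing t))
  | memSingE (s t : Tm ν) : AxHAt [ILF.mem s (Tm.sing t)] (ILF.eq s t)
  | memCupL (x s t : Tm ν) : AxHAt [ILF.mem x s] (ILF.mem x (Tm.cup s t))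
  | memCupR (x s t : Tm ν) : AxHAt [ILF.mem x t] (ILF.mem x (Tm.cup s t))
  | memCupE (C : ILF ν π) (x s t : Tm ν) :
      AxHAt [ILF.mem x (Tm.cup s t), ILF.imp (ILF.mem x s) C, ILF.imp (ILF.mem x t) C] C
  | memUnion (f z x y : Tm ν) :
      AxHAt [ILF.mem x z, ILF.mem y (Tm.ap f x)] (ILF.mem y (Tm.fUnion f z))
  | memUnionE (C : ILF ν π) (f z y : Tm ν) :
      AxHAt [ILF.mem y (Tm.fUnion f z),
        ILF.all (ILF.imp (ILF.mem (Tm.var 0) (z.rename Nat.succ))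
          (ILF.imp (ILF.mem (y.rename Nat.succ) (Tm.ap (f.rename Nat.succ) (Tm.var 0)))
            (C.rename Nat.succ)))] C

/-! ## Instances: majorizability, finite-set bounded quantifiers,
the Diller-Nahm interpretation -/

/-- The true formula `⊤`. -/
def topI {ν π : Type} : ILF ν π := ILF.imp ILF.bot ILF.bot

/-- Strict inequality `s < t := s + 1 ≤ t`. -/
def ltF {ν π : Type} (s t : Tm ν) : ILF ν π := ILF.le (Tm.succ s) t

/-- Bezem's strong majorizability relation `s ≤*_τ t`, defined by recursion on
the type `τ` (extended to finite-sequence types as in Section 1.3, and to the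
coding types `unit`/`prod` componentwise). -/
def majI {ν π : Type} : Ty → Tm ν → Tm ν → ILF ν π
  | Ty.nat, s, t => ILF.le s t
  | Ty.bool, s, t => ILF.le s t
  | Ty.unit, _, _ => topI
  | Ty.arr a b, f, g =>
      ILF.all (ILF.all (ILF.imp (majI a (Tm.var 0) (Tm.var 1))
        (ILF.and
          (majI b (Tm.ap (f.rename shift2) (Tm.var 0)) (Tm.ap (g.rename shift2) (Tm.var 1)))
          (majI b (Tm.ap (g.rename shift2) (Tm.var 0)) (Tm.ap (g.rename shift2) (Tm.var 1))))))
  | Ty.prod a b, s, t =>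
      ILF.and (majI a (Tm.pfst s) (Tm.pfst t)) (majI b (Tm.psnd s) (Tm.psnd t))
  | Ty.fseq a, s, t =>
      ILF.and (ILF.le (Tm.ap Tm.lenC s) (Tm.ap Tm.lenC t))
        (ILF.and
          (ILF.all (ILF.imp (ltF (Tm.var 0) (Tm.ap Tm.lenC (s.rename Nat.succ)))
            (majI a (Tm.ap (Tm.ap Tm.idxC (s.rename Nat.succ)) (Tm.var 0))
                    (Tm.ap (Tm.ap Tm.idxC (t.rename Nat.succ)) (Tm.var 0)))))
          (ILF.all (ILF.imp (ltF (Tm.var 0) (Tm.ap Tm.lenC (t.rename Nat.succ)))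
            (majI a (Tm.ap (Tm.ap Tm.idxC (t.rename Nat.succ)) (Tm.var 0))
                    (Tm.ap (Tm.ap Tm.idxC (t.rename Nat.succ)) (Tm.var 0))))))

/-- The finite-set bounded quantifier `⋀_{x ⊑ a} A := ∀x ∈ a A`
(binding variable `0` of `A`; the bound `a` is variable `0` of the result). -/
def bqMemI {ν π : Type} (A : ILF ν π) : ILF ν π :=
  ILF.all (ILF.imp (ILF.mem (Tm.var 0) (Tm.var 1))
    (A.rename (fun k => match k with | 0 => 0 | k + 1 => k + 2)))

/-- The monotone finite-set bounded quantifier `⋀_{x ⊑ a} A := ∀̃x ∈ a A`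
(quantification over the self-majorizing elements of `a`). -/
def bqMemMajI {ν π : Type} (τ : Ty) (A : ILF ν π) : ILF ν π :=
  ILF.all (ILF.imp (ILF.mem (Tm.var 0) (Tm.var 1))
    (ILF.imp (majI τ (Tm.var 0) (Tm.var 0))
      (A.rename (fun k => match k with | 0 => 0 | k + 1 => k + 2))))

/-- Parameters of the Diller-Nahm interpretation (precise witnesses,
contraction via finite sets). -/
def paDN {ν π : Type} : ParamsIL ν π where
  compP := fun _ => false
  arP := fun _ => 0
  wtyP := fun _ => Ty.unit
  ptP := fun _ => ILF.bot
  compT := fun _ => true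
  wtyT := fun τ => τ
  ptT := fun τ => ILF.and (ILF.tyP τ (Tm.var 1)) (ILF.eq (Tm.var 1) (Tm.var 0))
  W := fun _ => topI
  bty := Ty.fseq
  bq := fun _ A => bqMemI A
  etaTm := fun _ => Tm.singC
  joinTm := fun _ => Tm.cupC
  circTm := fun _ _ => Tm.unionC

/-- Parameters of the bounded Diller-Nahm interpretation (majorizability
witnesses, contraction via finite sets of monotone elements). -/
def paBDN {ν π : Type} : ParamsIL ν π where
  compP := fun _ => false
  arP := fun _ => 0
  wtyP := fun _ => Ty.unit
  ptP := fun _ => ILF.bot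
  compT := fun _ => true
  wtyT := fun τ => τ
  ptT := fun τ => ILF.and (ILF.tyP τ (Tm.var 1)) (majI τ (Tm.var 1) (Tm.var 0))
  W := fun τ => majI τ (Tm.var 0) (Tm.var 0)
  bty := Ty.fseq
  bq := fun τ A => bqMemMajI τ A
  etaTm := fun _ => Tm.singC
  joinTm := fun _ => Tm.cupC
  circTm := fun _ _ => Tm.unionC

/-- The Diller-Nahm interpretation `A ↦ A_∧(x; y)` of intuitionistic formulas
(with the typing predicates interpreted by precise witnesses, implication via
finite sets of counter-witnesses, and quantifiers treated uniformly). -/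
def dn {ν π : Type} : ILF ν π → ILF ν π
  | .atom P ts => .atom P (ts.map (Tm.rename shift2))
  | .eq s t => .eq (s.rename shift2) (t.rename shift2)
  | .le s t => .le (s.rename shift2) (t.rename shift2)
  | .mem s t => .mem (s.rename shift2) (t.rename shift2)
  | .tyP τ t => .and (.tyP τ (t.rename shift2)) (.eq (t.rename shift2) (Tm.var 1))
  | .bot => .bot
  | .and A B => .and ((dn A).subst (projS Tm.pfst)) ((dn B).subst (projS Tm.psnd))
  | .imp A B => .imp ((bqMemI (dn A)).subst limpSubA) ((dn B).subst limpSubB)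
  | .all A => .all ((dn A).rename rotRen)
  | .ex A => .ex ((dn A).rename rotRen)

end PFI

/-!
Girard's `°`-translation is sound from `I_t` into `I_t°`, and for the `°`-translated parameters
it sends `W_τ(t)` to `W_τ(t)`; so it turns the three derivations of circle-witnessability into
derivations in `I_t°`. It sends `|A|∘ = ||A°||ᶠ` to `(||A°||ᶠ)°`, which is not literally
`||A°||` (atoms gain or lose a `!`) but is interderivable with it in pure affine logic,
uniformly under substitution: `||A°||` is assembled from `°`-formulas and `!`-marked atoms by
`⊗`, `∃`, `!(· ⊸ ·)`, `!∀` and the bounded quantifier, which for the `°`-parameters is itself a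
`°`-formula, and `°`-formulas are `!`-stable. Cutting against these equivalences yields the
witnessability of `Γ° ⊢ A°`.
-/

namespace PFI

section Substitution

variable {ν π : Type}

namespace Tm

theorem subst_rename (ρ : Nat → Nat) (s : Nat → Tm ν) (t : Tm ν) :
    (t.rename ρ).subst s = t.subst (fun n => s (ρ n)) := by
  induction t <;> simp [rename, subst, *]

theorem rename_subst (s : Nat → Tm ν) (ρ : Nat → Nat) (t : Tm ν) :
    (t.subst s).rename ρ = t.subst (fun n => (s n).rename ρ) := by
  induction t <;> simp [rename, subst, *]

theorem subst_subst (s s' : Nat → Tm ν) (t : Tm ν) :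
    (t.subst s).subst s' = t.subst (fun n => (s n).subst s') := by
  induction t <;> simp [subst, *]

theorem rename_eq_subst (ρ : Nat → Nat) (t : Tm ν) :
    t.rename ρ = t.subst (fun n => var (ρ n)) := by
  induction t <;> simp [rename, subst, *]

@[simp]
theorem subst_var : (subst var : Tm ν → Tm ν) = id := by
  funext t
  induction t <;> simp [subst, *]

end Tm

theorem liftS_comp_liftR (s : Nat → Tm ν) (ρ : Nat → Nat) :
    (fun n => liftS s (liftR ρ n)) = liftS (fun n => s (ρ n)) := by
  funext n; cases n <;> simp [liftS, liftR]

theorem liftS_var_comp (ρ : Nat → Nat) :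
    liftS (fun n => Tm.var (ρ n)) = (fun n => Tm.var (liftR ρ n) : Nat → Tm ν) := by
  funext n; cases n <;> simp [liftS, liftR, Tm.rename]

theorem liftS_subst_comp (s s' : Nat → Tm ν) :
    (fun n => (liftS s n).subst (liftS s')) = liftS (fun n => (s n).subst s') := by
  funext n
  cases n <;> simp [liftS, Tm.subst, Tm.subst_rename, Tm.rename_subst]

@[simp]
theorem liftS_var : liftS (Tm.var : Nat → Tm ν) = Tm.var := by
  funext n; cases n <;> simp [liftS, Tm.rename]

namespace ALF

theorem subst_rename (A : ALF ν π) (ρ : Nat → Nat) (s : Nat → Tm ν) :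
    (A.rename ρ).subst s = A.subst (fun n => s (ρ n)) := by
  induction A generalizing ρ s <;>
    simp [rename, subst, Tm.subst_rename, Function.comp_def, liftS_comp_liftR, *]

theorem subst_subst (A : ALF ν π) (s s' : Nat → Tm ν) :
    (A.subst s).subst s' = A.subst (fun n => (s n).subst s') := by
  induction A generalizing s s' <;>
    simp [subst, Tm.subst_subst, Function.comp_def, liftS_subst_comp, *]

theorem rename_eq_subst (A : ALF ν π) (ρ : Nat → Nat) :
    A.rename ρ = A.subst (fun n => Tm.var (ρ n)) := by
  induction A generalizing ρ <;> simp [rename, subst, Tm.rename_eq_subst, liftS_var_comp, *]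

@[simp]
theorem subst_var (A : ALF ν π) : A.subst Tm.var = A := by
  induction A <;> simp [subst, *]

/-- Weakening under a binder and then instantiating the bound variable with itself. -/
theorem rename_liftR_succ_subst_sub1_var (A : ALF ν π) :
    (A.rename (liftR Nat.succ)).subst (Tm.sub1 (Tm.var 0)) = A := by
  have h : (fun n => Tm.sub1 (Tm.var 0) (liftR Nat.succ n)) = (Tm.var : Nat → Tm ν) := by
    funext n; cases n <;> rfl
  rw [subst_rename, h, subst_var]

end ALF

theorem circ_rename (A : ILF ν π) (ρ : Nat → Nat) : circ (A.rename ρ) = (circ A).rename ρ := by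
  induction A generalizing ρ <;> simp [ILF.rename, ALF.rename, circ, *]

theorem circ_subst (A : ILF ν π) (s : Nat → Tm ν) : circ (A.subst s) = (circ A).subst s := by
  induction A generalizing s <;> simp [ILF.subst, ALF.subst, circ, *]

theorem forget_subst (A : ALF ν π) (s : Nat → Tm ν) :
    forget (A.subst s) = (forget A).subst s := by
  induction A generalizing s <;> simp [ILF.subst, ALF.subst, forget, *]

theorem circ_forget_circ (A : ILF ν π) : circ (forget (circ A)) = circ A := by
  induction A <;> simp [circ, forget, *]

end Substitution

namespace ALPf

variable {ν π : Type} {Ax : List (ALF ν π) → ALF ν π → Prop}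

theorem cut_head {C C' B : ALF ν π} {Δ : List (ALF ν π)} (h₁ : ALPf Ax [C] C')
    (h₂ : ALPf Ax (C' :: Δ) B) : ALPf Ax (C :: Δ) B :=
  cut (Γ := [C]) h₁ h₂

theorem trans {Δ : List (ALF ν π)} {C B : ALF ν π} (h₁ : ALPf Ax Δ C) (h₂ : ALPf Ax [C] B) :
    ALPf Ax Δ B := by
  simpa using cut (Δ := []) h₁ h₂

theorem bang_elim (X : ALF ν π) : ALPf Ax [ALF.bang X] X :=
  bangL (id X)

theorem bang_bang (X : ALF ν π) : ALPf Ax [ALF.bang X] (ALF.bang (ALF.bang X)) :=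
  bangR (Γ := [X]) (id (ALF.bang X))

theorem bang_mono {X Y : ALF ν π} (h : ALPf Ax [X] Y) : ALPf Ax [ALF.bang X] (ALF.bang Y) :=
  bangR (Γ := [X]) (bangL h)

theorem tens_mono {A A' B B' : ALF ν π} (hA : ALPf Ax [A] A') (hB : ALPf Ax [B] B') :
    ALPf Ax [ALF.tens A B] (ALF.tens A' B') :=
  tensL (tensR (Γ := [A]) (Δ := [B]) hA hB)

theorem limp_mono {A A' B B' : ALF ν π} (hA : ALPf Ax [A'] A) (hB : ALPf Ax [B] B') :
    ALPf Ax [ALF.limp A B] (ALF.limp A' B') :=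
  limpR (exch (List.Perm.swap A' (ALF.limp A B) []) (limpL (Γ := [A']) (Δ := []) hA hB))

theorem all_mono {A B : ALF ν π} (h : ALPf Ax [A] B) : ALPf Ax [ALF.all A] (ALF.all B) := by
  refine allR (Γ := [ALF.all A]) (allL (Tm.var 0) ?_)
  rwa [ALF.rename_liftR_succ_subst_sub1_var]

theorem ex_mono {A B : ALF ν π} (h : ALPf Ax [A] B) : ALPf Ax [ALF.ex A] (ALF.ex B) := by
  refine exL (Γ := []) (exR (Tm.var 0) ?_)
  rwa [ALF.rename_liftR_succ_subst_sub1_var]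

theorem tens_bang {X Y : ALF ν π} (hX : ALPf Ax [X] (ALF.bang X))
    (hY : ALPf Ax [Y] (ALF.bang Y)) : ALPf Ax [ALF.tens X Y] (ALF.bang (ALF.tens X Y)) := by
  have hbang : ALPf Ax [ALF.bang X, ALF.bang Y] (ALF.bang (ALF.tens X Y)) :=
    bangR (Γ := [X, Y]) <|
      tensR (Γ := [ALF.bang X]) (Δ := [ALF.bang Y]) (bang_elim X) (bang_elim Y)
  have hY' : ALPf Ax [Y, ALF.bang X] (ALF.bang (ALF.tens X Y)) :=
    cut_head hY (exch (List.Perm.swap _ _ []) hbang)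
  exact tensL (cut_head hX (exch (List.Perm.swap _ _ []) hY'))

theorem ex_bang {X : ALF ν π} (hX : ALPf Ax [X] (ALF.bang X)) :
    ALPf Ax [ALF.ex X] (ALF.bang (ALF.ex X)) := by
  refine exL (Γ := []) (cut_head hX (bangR (Γ := [X]) (exR (Tm.var 0) ?_)))
  rw [ALF.rename_liftR_succ_subst_sub1_var]
  exact bang_elim X

theorem circ_bang (D : ILF ν π) : ALPf Ax [circ D] (ALF.bang (circ D)) := by
  induction D with
  | and A B ihA ihB => exact tens_bang ihA ihB
  | ex A ih => exact ex_bang ih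
  | _ => exact bang_bang _

theorem of_forall₂_append {Δ Δ' : List (ALF ν π)}
    (h : List.Forall₂ (fun C C' => ALPf Ax [C] C') Δ Δ') (Θ : List (ALF ν π)) {B : ALF ν π}
    (hB : ALPf Ax (Θ ++ Δ') B) : ALPf Ax (Θ ++ Δ) B := by
  induction h generalizing Θ with
  | nil => exact hB
  | @cons C C' Δ Δ' hC _ ih =>
    have hΔ : ALPf Ax (Θ ++ C' :: Δ) B := by
      simpa using ih (Θ ++ [C']) (by simpa using hB)
    exact exch List.perm_middle.symm (cut_head hC (exch List.perm_middle hΔ))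

theorem of_forall₂ {Δ Δ' : List (ALF ν π)} {B : ALF ν π}
    (h : List.Forall₂ (fun C C' => ALPf Ax [C] C') Δ Δ') (hB : ALPf Ax Δ' B) : ALPf Ax Δ B :=
  of_forall₂_append h [] hB

/-- `°`-formulas are `!`-stable, so they may serve as the context of a promotion. -/
theorem bangR_circ {Γ : List (ILF ν π)} {X : ALF ν π} (h : ALPf Ax (Γ.map circ) X) :
    ALPf Ax (Γ.map circ) (ALF.bang X) := by
  have hbang : ALPf Ax ((Γ.map circ).map ALF.bang) X :=
    of_forall₂ (List.forall₂_map_left_iff.2 (List.forall₂_same.2 fun C _ => bang_elim C)) h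
  exact of_forall₂ (List.forall₂_map_right_iff.2 (List.forall₂_same.2 fun C hC => by
    obtain ⟨D, _, rfl⟩ := List.mem_map.1 hC
    exact circ_bang D)) (bangR hbang)

theorem con_of_bang {C B : ALF ν π} {Γ : List (ALF ν π)} (hC : ALPf Ax [C] (ALF.bang C))
    (h : ALPf Ax (C :: C :: Γ) B) : ALPf Ax (C :: Γ) B := by
  have h₁ := exch (List.Perm.swap _ _ _) (bangL h)
  exact cut_head hC (con (exch (List.Perm.swap _ _ _) (bangL h₁)))

end ALPf

theorem ILPf.toALPf_circ {ν π : Type} {AxIt : List (ILF ν π) → ILF ν π → Prop}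
    {Γ : List (ILF ν π)} {A : ILF ν π} (h : ILPf AxIt Γ A) :
    ALPf (circAx AxIt) (Γ.map circ) (circ A) := by
  have map_rename : ∀ Γ : List (ILF ν π),
      (Γ.map (ILF.rename Nat.succ)).map circ = (Γ.map circ).map (ALF.rename Nat.succ) := by
    simp [Function.comp_def, circ_rename]
  induction h with
  | ax h => exact ALPf.ax ⟨_, _, h, rfl, rfl⟩
  | id A => exact ALPf.id (circ A)
  | exch p _ ih => exact ALPf.exch (p.map circ) ih
  | efq => exact ALPf.bangL ALPf.efq
  | cut _ _ ih₁ ih₂ => rw [List.map_append]; exact ALPf.cut ih₁ ih₂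
  | andR _ _ ih₁ ih₂ => rw [List.map_append]; exact ALPf.tensR ih₁ ih₂
  | andL _ ih => exact ALPf.tensL ih
  | impR _ ih => exact ALPf.bangR_circ (ALPf.limpR ih)
  | impL _ _ ih₁ ih₂ =>
    rw [List.map_cons, List.map_append]
    exact ALPf.bangL (ALPf.limpL ih₁ ih₂)
  | allR _ ih =>
    rw [map_rename] at ih
    exact ALPf.bangR_circ (ALPf.allR ih)
  | allL t _ ih =>
    rw [List.map_cons, circ_subst] at ih
    exact ALPf.bangL (ALPf.allL t ih)
  | exR t _ ih =>
    rw [circ_subst] at ih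
    exact ALPf.exR t ih
  | exL _ ih =>
    rw [List.map_cons, map_rename, circ_rename] at ih
    exact ALPf.exL ih
  | con _ ih => exact ALPf.con_of_bang (ALPf.circ_bang _) ih
  | wkn _ ih => exact ALPf.wkn ih

section CircForgetEquiv

variable {ν π : Type} (Ax : List (ALF ν π) → ALF ν π → Prop)

def CircForgetEquiv (X : ALF ν π) : Prop :=
  ∀ s : Nat → Tm ν, IffPfA Ax (X.subst s) ((circ (forget X)).subst s)

variable {Ax}

namespace CircForgetEquiv

theorem subst {X : ALF ν π} (h : CircForgetEquiv Ax X) (s : Nat → Tm ν) :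
    CircForgetEquiv Ax (X.subst s) := by
  intro s'
  rw [forget_subst, circ_subst, ALF.subst_subst, ALF.subst_subst]
  exact h _

theorem rename {X : ALF ν π} (h : CircForgetEquiv Ax X) (ρ : Nat → Nat) :
    CircForgetEquiv Ax (X.rename ρ) := by
  rw [ALF.rename_eq_subst]
  exact h.subst _

theorem of_circ (D : ILF ν π) : CircForgetEquiv Ax (circ D) := by
  intro s
  rw [circ_forget_circ]
  exact ⟨ALPf.id _, ALPf.id _⟩

theorem tens {A B : ALF ν π} (hA : CircForgetEquiv Ax A) (hB : CircForgetEquiv Ax B) :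
    CircForgetEquiv Ax (ALF.tens A B) :=
  fun s => ⟨ALPf.tens_mono (hA s).1 (hB s).1, ALPf.tens_mono (hA s).2 (hB s).2⟩

theorem ex {A : ALF ν π} (hA : CircForgetEquiv Ax A) : CircForgetEquiv Ax (ALF.ex A) :=
  fun _ => ⟨ALPf.ex_mono (hA _).1, ALPf.ex_mono (hA _).2⟩

theorem bang {X : ALF ν π} (h : CircForgetEquiv Ax X) : CircForgetEquiv Ax (ALF.bang X) := by
  intro s
  have hbang : ALPf Ax [(circ (forget X)).subst s] (ALF.bang ((circ (forget X)).subst s)) := by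
    rw [← circ_subst]
    exact ALPf.circ_bang _
  exact ⟨ALPf.bangL (h s).1, ALPf.cut_head hbang (ALPf.bang_mono (h s).2)⟩

theorem bang_of_circ_forget_eq {X : ALF ν π} (h : circ (forget X) = ALF.bang X) :
    CircForgetEquiv Ax (ALF.bang X) := by
  intro s
  change IffPfA Ax _ ((circ (forget X)).subst s)
  rw [h]
  exact ⟨ALPf.id _, ALPf.id _⟩

theorem bang_limp {A B : ALF ν π} (hA : CircForgetEquiv Ax A) (hB : CircForgetEquiv Ax B) :
    CircForgetEquiv Ax (ALF.bang (ALF.limp A B)) := fun s =>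
  ⟨ALPf.bang_mono (ALPf.limp_mono (hA s).2 (hB s).1),
    ALPf.bang_mono (ALPf.limp_mono (hA s).1 (hB s).2)⟩

theorem bang_all {A : ALF ν π} (hA : CircForgetEquiv Ax A) :
    CircForgetEquiv Ax (ALF.bang (ALF.all A)) := fun _ =>
  ⟨ALPf.bang_mono (ALPf.all_mono (hA _).1), ALPf.bang_mono (ALPf.all_mono (hA _).2)⟩

/-- For the `°`-parameters the basic bounded quantifiers are `°`-formulas; on tuples it is
built from them by substitutions and renamings. -/
theorem bang_bqStructA (q : ParamsIL ν π) (τ : Ty) {X : ALF ν π}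
    (h : CircForgetEquiv Ax (ALF.bang X)) :
    CircForgetEquiv Ax (ALF.bang (bqStructA q.toALc.bq τ X)) := by
  induction τ generalizing X with
  | unit => exact (h.subst _).rename _
  | prod τ₁ τ₂ ih₁ ih₂ => exact (ih₁ ((ih₂ (h.subst _)).rename _)).subst _
  | _ => exact (of_circ _).bang

theorem inter_circ (q : ParamsIL ν π) (B : ILF ν π) :
    CircForgetEquiv Ax (inter q.toALc (circ B)) := by
  induction B with
  | atom P ts =>
    refine bang_bqStructA q _ ?_
    by_cases hP : q.compP P
    · simpa [inter, ParamsIL.toALc, hP, circ_subst] using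
        (of_circ ((q.ptP P).subst (atomSub ts))).bang
    · simpa [inter, ParamsIL.toALc, hP] using bang_of_circ_forget_eq (Ax := Ax) rfl
  | tyP τ t =>
    refine bang_bqStructA q _ ?_
    by_cases hτ : q.compT τ
    · simpa [inter, ParamsIL.toALc, hτ, circ_subst] using
        (of_circ ((q.ptT τ).subst (tySub t))).bang
    · simpa [inter, ParamsIL.toALc, hτ] using bang_of_circ_forget_eq (Ax := Ax) rfl
  | eq | le | mem | bot => exact bang_bqStructA q _ (bang_of_circ_forget_eq rfl)
  | and A B ihA ihB => exact (ihA.subst _).tens (ihB.subst _)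
  | imp A B ihA ihB => exact bang_bqStructA q _ ((ihA.subst _).bang_limp (ihB.subst _))
  | all A ih => exact bang_bqStructA q _ (ih.rename _).bang_all
  | ex A ih => exact (ih.rename _).ex

end CircForgetEquiv

end CircForgetEquiv

theorem circ_WatI {ν π : Type} (q : ParamsIL ν π) (τ : Ty) (t : Tm ν) :
    circ (WatI q τ t) = Wat q.toALc τ t := by
  simp only [WatI, Wat, circ_subst]
  rfl

/-- Lemma 3.8 of the paper.
If a sequent `Γ ⊢ A` of the source intuitionistic theory is `∘`-witnessable in
the target intuitionistic theory `I_t`, then the sequent `Γ° ⊢ A°` is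
witnessable in the affine theory `I_t°` (with respect to the `°`-translated
parameters). -/
theorem statement14 {ν π : Type} (q : ParamsIL ν π)
    (AxIt : List (ILF ν π) → ILF ν π → Prop)
    (Γ : List (ILF ν π)) (A : ILF ν π) :
    CircWitnessable q AxIt Γ A →
    ALWitnessable q.toALc (circAx AxIt) (Γ.map circ) (circ A) := by
  rintro ⟨γ, a, hγ, ha, hγW, haW, hseq⟩
  have hlen : (Γ.map circ).length = Γ.length := List.length_map circ
  refine ⟨fun i => γ (Fin.cast hlen i), a, fun i => hγ _, ha, fun i => ?_, ?_, ?_⟩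
  · simpa [circ_WatI, Function.comp_def] using (hγW (Fin.cast hlen i)).toALPf_circ
  · simpa [circ_WatI, Function.comp_def] using haW.toALPf_circ
  · have hseq' := hseq.toALPf_circ
    rw [List.map_cons, List.map_append, List.map_ofFn, List.map_ofFn, circ_WatI] at hseq'
    refine ALPf.trans (ALPf.of_forall₂ ?_ hseq') ?_
    · refine .cons (ALPf.bang_elim _) (List.rel_append ?_ ?_) <;>
        refine List.forall₂_iff_get.2 ⟨by simp, fun i _ _ => ?_⟩
      · simpa [circ_WatI] using ALPf.bang_elim _
      · simpa [circle, circ_subst] using ((CircForgetEquiv.inter_circ q _) _).1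
    · simpa [circle, circ_subst] using ((CircForgetEquiv.inter_circ q A) _).2

end PFI
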